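/- arXiv:1902.03695 — 4 statements merged into one kernel-verified Lean document; each statement's English description precedes it below -/
import Mathlib

section
/- Let Γ=(X,R) be a finite connected nontrivial k-regular graph with adjacency matrix A, and let Y be a non-empty proper subset of X whose characteristic vector lies in V₀ ⊕ Vᵢ, where V₀ is the span of the all-ones vector and Vᵢ is the eigenspace of A for eigenvalue θ ≠ k. Then every vertex of X∖Y is adjacent to exactly ((k−θ)/|X|)·|Y| vertices of Y, and every vertex of Y is adjacent to exactly θ + ((k−θ)/|X|)·|Y| vertices of Y. -/
/-- Result 1 (De Bruyn–Suzuki), part (ii): if the characteristic vector of a nonempty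
proper subset `Y` of a finite connected nontrivial `k`-regular graph lies in
`V₀ ⊕ Vᵢ` (span of all-ones vector plus the eigenspace for eigenvalue `θ ≠ k`),
then every vertex outside `Y` has exactly `((k-θ)/|X|)·|Y|` neighbours in `Y` and
every vertex of `Y` has exactly `θ + ((k-θ)/|X|)·|Y|` neighbours in `Y`. -/
theorem stmt_0 {X : Type*} [Fintype X] [DecidableEq X]
    (G : SimpleGraph X) [DecidableRel G.Adj]
    (k : ℕ) (hreg : G.IsRegularOfDegree k)
    (hconn : G.Connected) (hne : G ≠ ⊥) (hnc : G ≠ ⊤)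
    (Y : Finset X) (hY : Y.Nonempty) (hYp : Y ≠ Finset.univ)
    (θ : ℝ) (hθ : θ ≠ (k : ℝ))
    (c : ℝ) (v : X → ℝ)
    (hv : (G.adjMatrix ℝ).mulVec v = θ • v)
    (hdecomp : ∀ x, (if x ∈ Y then (1:ℝ) else 0) = c + v x) :
    (∀ x, x ∉ Y → ((Finset.univ.filter (fun y => y ∈ Y ∧ G.Adj x y)).card : ℝ)
        = ((k : ℝ) - θ) / (Fintype.card X : ℝ) * (Y.card : ℝ)) ∧
    (∀ x, x ∈ Y → ((Finset.univ.filter (fun y => y ∈ Y ∧ G.Adj x y)).card : ℝ)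
        = θ + ((k : ℝ) - θ) / (Fintype.card X : ℝ) * (Y.card : ℝ)) := by
  have hXpos : (0:ℝ) < (Fintype.card X : ℝ) := by
    have : Nonempty X := ⟨hY.choose⟩
    exact_mod_cast Fintype.card_pos
  -- sum of v is zero
  have hsum : ∑ x, v x = 0 := by
    have h1 : ∑ x, ((G.adjMatrix ℝ).mulVec v) x = (k:ℝ) * ∑ x, v x := by
      simp only [Matrix.mulVec, dotProduct, SimpleGraph.adjMatrix_apply]
      rw [Finset.sum_comm, Finset.mul_sum]
      refine Finset.sum_congr rfl fun y _ => ?_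
      simp only [ite_mul, one_mul, zero_mul]
      calc ∑ x : X, (if G.Adj x y then v y else 0)
          = ((Finset.univ.filter (fun x => G.Adj x y)).card : ℝ) * v y := by
            rw [Finset.sum_ite, Finset.sum_const_zero, Finset.sum_const, add_zero, nsmul_eq_mul]
        _ = (k:ℝ) * v y := by
            congr 2
            simp_rw [SimpleGraph.adj_comm]
            rw [← SimpleGraph.neighborFinset_eq_filter]; exact hreg y
    have h2 : ∑ x, ((G.adjMatrix ℝ).mulVec v) x = θ * ∑ x, v x := by
      rw [hv]; simp [Finset.mul_sum]
    have h3 : ((k:ℝ) - θ) * ∑ x, v x = 0 := by rw [sub_mul]; rw [h1] at h2; linarith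
    rcases mul_eq_zero.mp h3 with h | h
    · exact absurd (by linarith : θ = (k:ℝ)) hθ
    · exact h
  -- value of c
  have hc : c = (Y.card : ℝ) / (Fintype.card X : ℝ) := by
    have := Finset.sum_congr rfl (fun x (_ : x ∈ Finset.univ) => hdecomp x)
    rw [Finset.sum_boole] at this
    rw [Finset.sum_add_distrib, hsum, add_zero, Finset.sum_const, nsmul_eq_mul] at this
    simp only [Finset.filter_mem_eq_inter, Finset.univ_inter, Finset.card_univ] at this
    field_simp
    rw [this]; ring
  -- key formula
  have key : ∀ x, ((Finset.univ.filter (fun y => y ∈ Y ∧ G.Adj x y)).card : ℝ)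
      = c * k + θ * v x := by
    intro x
    have e1 : (Finset.univ.filter (fun y => y ∈ Y ∧ G.Adj x y))
        = (G.neighborFinset x).filter (fun y => y ∈ Y) := by
      ext y
      simp [SimpleGraph.mem_neighborFinset, and_comm]
    have e2 : ((Finset.univ.filter (fun y => y ∈ Y ∧ G.Adj x y)).card : ℝ)
        = ∑ y ∈ G.neighborFinset x, (if y ∈ Y then (1:ℝ) else 0) := by
      rw [e1, Finset.sum_boole]
    rw [e2]
    have e3 : ∑ y ∈ G.neighborFinset x, (if y ∈ Y then (1:ℝ) else 0)
        = ∑ y ∈ G.neighborFinset x, (c + v y) := by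
      exact Finset.sum_congr rfl fun y _ => hdecomp y
    rw [e3, Finset.sum_add_distrib, Finset.sum_const, nsmul_eq_mul,
      SimpleGraph.card_neighborFinset_eq_degree, hreg x,
      ← SimpleGraph.adjMatrix_mulVec_apply, hv]
    simp [mul_comm]
  constructor
  · intro x hx
    have hvx : v x = -c := by have := hdecomp x; simp [hx] at this; linarith
    rw [key x, hvx, hc]; field_simp; ring
  · intro x hx
    have hvx : v x = 1 - c := by have := hdecomp x; simp [hx] at this; linarith
    rw [key x, hvx, hc]; field_simp; ring
end

section
/- Let Γ=(X,R) be a finite connected nontrivial k-regular graph with adjacency matrix A, and Y a non-empty proper subset of X. If there are constants h₁, h₂ such that every vertex of Y is adjacent to exactly h₁ vertices of Y and every vertex of X∖Y is adjacent to exactly h₂ vertices of Y, then the characteristic vector χ_Y lies in V₀ ⊕ Vᵢ for some eigenspace Vᵢ of A with i ≥ 1, where V₀ is the span of the all-ones vector. -/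
/-!
Write `χ` for the characteristic vector of `Y` and `𝟙` for the all-ones vector. The
neighbour counts say `A χ = (h₁ - h₂) χ + h₂ 𝟙`, and regularity says `A 𝟙 = k 𝟙`. Since the
graph is connected, some edge leaves `Y`, so `h₂ > 0` and `θ := h₁ - h₂ < k`. Hence
`χ - c 𝟙` with `c = h₂ / (k - θ)` is a `θ`-eigenvector, nonzero because `χ` is not constant.
-/

open Finset Matrix

theorem Matrix.mulVec_sub_const_eq_smul {n K : Type*} [Fintype n] [Field K]
    {A : Matrix n n K} {u : n → K} {θ k h : K} (hθk : θ ≠ k)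
    (hu : A *ᵥ u = θ • u + Function.const n h)
    (hA : A *ᵥ Function.const n 1 = k • Function.const n 1) :
    A *ᵥ (u - Function.const n (h / (k - θ))) = θ • (u - Function.const n (h / (k - θ))) := by
  have hkθ : k - θ ≠ 0 := sub_ne_zero.mpr hθk.symm
  have hconst : Function.const n (h / (k - θ)) = (h / (k - θ)) • Function.const n (1 : K) := by
    ext; simp
  rw [mulVec_sub, hu, hconst, mulVec_smul, hA]
  ext x
  simp only [Pi.add_apply, Pi.sub_apply, Pi.smul_apply, Function.const_apply, smul_eq_mul]
  field_simp
  ring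

namespace SimpleGraph

variable {V : Type*} {G : SimpleGraph V}

theorem Connected.exists_adj_mem_notMem (hG : G.Connected) {S : Set V} {x y : V}
    (hx : x ∈ S) (hy : y ∉ S) : ∃ u ∈ S, ∃ v ∉ S, G.Adj u v := by
  obtain ⟨d, -, hd₁, hd₂⟩ := (hG x y).some.exists_boundary_dart S hx hy
  exact ⟨d.fst, hd₁, d.snd, hd₂, d.adj⟩

variable [Fintype V] [DecidableEq V] [DecidableRel G.Adj]

theorem adjMatrix_mulVec_indicator_apply {R : Type*} [NonAssocSemiring R] (Y : Finset V)
    (x : V) :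
    (G.adjMatrix R *ᵥ fun y => if y ∈ Y then 1 else 0) x
      = #{y | y ∈ Y ∧ G.Adj x y} := by
  rw [adjMatrix_mulVec_apply, sum_boole]
  congr 2
  ext y
  simp [and_comm]

theorem card_filter_mem_adj_le_degree (Y : Finset V) (x : V) :
    #{y | y ∈ Y ∧ G.Adj x y} ≤ G.degree x := by
  rw [← card_neighborFinset_eq_degree]
  exact card_le_card fun y hy => by simp_all

end SimpleGraph

open SimpleGraph

theorem stmt_1_general {X : Type*} [Fintype X] [DecidableEq X]
    (G : SimpleGraph X) [DecidableRel G.Adj]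
    (k : ℕ) (hreg : G.IsRegularOfDegree k)
    (hconn : G.Connected)
    (Y : Finset X) (hY : Y.Nonempty) (hYp : Y ≠ Finset.univ)
    (h₁ h₂ : ℕ)
    (hin : ∀ x ∈ Y, (Finset.univ.filter (fun y => y ∈ Y ∧ G.Adj x y)).card = h₁)
    (hout : ∀ x ∉ Y, (Finset.univ.filter (fun y => y ∈ Y ∧ G.Adj x y)).card = h₂) :
    ∃ (θ c : ℝ) (v : X → ℝ), v ≠ 0 ∧ θ ≠ (k : ℝ) ∧
      (G.adjMatrix ℝ).mulVec v = θ • v ∧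
      ∀ x, (if x ∈ Y then (1:ℝ) else 0) = c + v x := by
  obtain ⟨x₀, hx₀⟩ := hY
  obtain ⟨y₀, hy₀⟩ : ∃ y, y ∉ Y := by simpa [eq_univ_iff_forall] using hYp
  obtain ⟨u, hu, w, hw, huw⟩ := hconn.exists_adj_mem_notMem (S := ↑Y) hx₀ hy₀
  have hh₂ : 0 < h₂ := hout w hw ▸ card_pos.mpr ⟨u, by simpa [huw.symm] using hu⟩
  have hh₁ : h₁ ≤ k := hin x₀ hx₀ ▸ hreg x₀ ▸ card_filter_mem_adj_le_degree Y x₀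
  have hθk : (h₁ - h₂ : ℝ) ≠ k := by
    have : (h₁ : ℝ) ≤ k := by exact_mod_cast hh₁
    have : (0 : ℝ) < h₂ := by exact_mod_cast hh₂
    exact ne_of_lt (by linarith)
  set χ : X → ℝ := fun y => if y ∈ Y then 1 else 0
  have hχ : G.adjMatrix ℝ *ᵥ χ = (h₁ - h₂ : ℝ) • χ + Function.const X (h₂ : ℝ) := by
    ext x
    rw [adjMatrix_mulVec_indicator_apply]
    by_cases hx : x ∈ Y <;> simp [χ, hx, hin, hout]
  have hA : G.adjMatrix ℝ *ᵥ Function.const X 1 = (k : ℝ) • Function.const X 1 := by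
    ext x
    simp [hreg x]
  set c : ℝ := h₂ / (k - (h₁ - h₂))
  refine ⟨h₁ - h₂, c, χ - Function.const X c, fun h => ?_, hθk,
    mulVec_sub_const_eq_smul hθk hχ hA, fun x => by simp [χ]⟩
  have hvx₀ := congrFun h x₀
  have hvy₀ := congrFun h y₀
  simp [χ, hx₀, hy₀] at hvx₀ hvy₀
  linarith

/-- Result 1 (De Bruyn–Suzuki), part (i): an intriguing set `Y` (every vertex of `Y`
has `h₁` neighbours in `Y`, every vertex outside has `h₂` neighbours in `Y`) of a
finite connected nontrivial regular graph has its characteristic vector in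
`V₀ ⊕ Vᵢ` for some non-principal eigenspace `Vᵢ`. -/
theorem stmt_1 {X : Type*} [Fintype X] [DecidableEq X]
    (G : SimpleGraph X) [DecidableRel G.Adj]
    (k : ℕ) (hreg : G.IsRegularOfDegree k)
    (hconn : G.Connected) (hne : G ≠ ⊥) (hnc : G ≠ ⊤)
    (Y : Finset X) (hY : Y.Nonempty) (hYp : Y ≠ Finset.univ)
    (h₁ h₂ : ℕ)
    (hin : ∀ x ∈ Y, (Finset.univ.filter (fun y => y ∈ Y ∧ G.Adj x y)).card = h₁)
    (hout : ∀ x ∉ Y, (Finset.univ.filter (fun y => y ∈ Y ∧ G.Adj x y)).card = h₂) :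
    ∃ (θ c : ℝ) (v : X → ℝ), v ≠ 0 ∧ θ ≠ (k : ℝ) ∧
      (G.adjMatrix ℝ).mulVec v = θ • v ∧
      ∀ x, (if x ∈ Y then (1:ℝ) else 0) = c + v x :=
  stmt_1_general G k hreg hconn Y hY hYp h₁ h₂ hin hout
end

section
/- Let Γ=(X,R) be a finite connected regular graph with eigenspace decomposition ℝ^X = V₀ ⊕ V₁ ⊕ … ⊕ V_s (V₀ spanned by the all-ones vector). If Y₁ and Y₂ are non-empty proper subsets of X with χ_{Y₁} ∈ V₀ ⊕ Vᵢ and χ_{Y₂} ∈ V₀ ⊕ V_j for distinct indices i ≠ j with i, j ≥ 1, then |Y₁ ∩ Y₂| · |X| = |Y₁| · |Y₂|. -/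
/-- Result 2: if `Y₁` and `Y₂` are intriguing sets of a finite connected regular graph
for different (non-principal) eigenspaces, then `|Y₁ ∩ Y₂|·|X| = |Y₁|·|Y₂|`. -/
theorem stmt_2 {X : Type*} [Fintype X] [DecidableEq X]
    (G : SimpleGraph X) [DecidableRel G.Adj]
    (k : ℕ) (hreg : G.IsRegularOfDegree k) (hconn : G.Connected)
    (Y₁ Y₂ : Finset X) (hY₁ : Y₁.Nonempty) (hY₁p : Y₁ ≠ Finset.univ)
    (hY₂ : Y₂.Nonempty) (hY₂p : Y₂ ≠ Finset.univ)
    (θ₁ θ₂ : ℝ) (hθ : θ₁ ≠ θ₂) (hθ₁ : θ₁ ≠ (k : ℝ)) (hθ₂ : θ₂ ≠ (k : ℝ))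
    (c₁ c₂ : ℝ) (v₁ v₂ : X → ℝ)
    (hv₁ : (G.adjMatrix ℝ).mulVec v₁ = θ₁ • v₁)
    (hv₂ : (G.adjMatrix ℝ).mulVec v₂ = θ₂ • v₂)
    (hd₁ : ∀ x, (if x ∈ Y₁ then (1:ℝ) else 0) = c₁ + v₁ x)
    (hd₂ : ∀ x, (if x ∈ Y₂ then (1:ℝ) else 0) = c₂ + v₂ x) :
    (Y₁ ∩ Y₂).card * Fintype.card X = Y₁.card * Y₂.card := by
  classical
  set A := G.adjMatrix ℝ with hA
  have hsym : ∀ x y, A x y = A y x := by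
    intro x y
    simp [hA, SimpleGraph.adjMatrix_apply, G.adj_comm]
  have hrow : ∀ x, ∑ y, A x y = (k : ℝ) := by
    intro x
    simp only [hA, SimpleGraph.adjMatrix_apply]
    rw [Finset.sum_boole]
    have h : (Finset.univ.filter fun y => G.Adj x y) = G.neighborFinset x := by
      ext y; simp [SimpleGraph.mem_neighborFinset]
    rw [h]
    simp [hreg x]
  -- eigenvectors with eigenvalue ≠ k sum to zero
  have hsum : ∀ (θ : ℝ) (v : X → ℝ), θ ≠ (k : ℝ) →
      A.mulVec v = θ • v → ∑ x, v x = 0 := by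
    intro θ v hθk hv
    have h1 : ∑ x, (A.mulVec v) x = θ * ∑ x, v x := by
      rw [hv]; simp [Finset.mul_sum]
    have h2 : ∑ x, (A.mulVec v) x = (k : ℝ) * ∑ x, v x := by
      simp only [Matrix.mulVec, dotProduct]
      rw [Finset.sum_comm, Finset.mul_sum]
      refine Finset.sum_congr rfl fun y _ => ?_
      rw [← Finset.sum_mul]
      congr 1
      rw [← hrow y]
      exact Finset.sum_congr rfl fun x _ => hsym x y
    have h3 : (θ - (k : ℝ)) * ∑ x, v x = 0 := by
      rw [sub_mul, ← h1, ← h2, sub_self]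
    rcases mul_eq_zero.mp h3 with h | h
    · exact absurd (sub_eq_zero.mp h) hθk
    · exact h
  have hS1 : ∑ x, v₁ x = 0 := hsum θ₁ v₁ hθ₁ hv₁
  have hS2 : ∑ x, v₂ x = 0 := hsum θ₂ v₂ hθ₂ hv₂
  -- orthogonality of v₁ and v₂
  have horth : ∑ x, v₁ x * v₂ x = 0 := by
    have e1 : ∑ x, (A.mulVec v₁) x * v₂ x = θ₁ * ∑ x, v₁ x * v₂ x := by
      rw [hv₁]; simp [Finset.mul_sum, mul_assoc]
    have e2 : ∑ x, (A.mulVec v₁) x * v₂ x = θ₂ * ∑ x, v₁ x * v₂ x := by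
      simp only [Matrix.mulVec, dotProduct]
      have key : ∀ x, (∑ y, A x y * v₁ y) * v₂ x = ∑ y, v₁ y * (A y x * v₂ x) := by
        intro x
        rw [Finset.sum_mul]
        refine Finset.sum_congr rfl fun y _ => ?_
        rw [hsym x y]; ring
      calc ∑ x, (∑ y, A x y * v₁ y) * v₂ x
          = ∑ x, ∑ y, v₁ y * (A y x * v₂ x) := Finset.sum_congr rfl fun x _ => key x
        _ = ∑ y, ∑ x, v₁ y * (A y x * v₂ x) := Finset.sum_comm
        _ = ∑ y, v₁ y * (∑ x, A y x * v₂ x) := by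
            refine Finset.sum_congr rfl fun y _ => ?_
            rw [Finset.mul_sum]
        _ = ∑ y, v₁ y * (A.mulVec v₂) y := rfl
        _ = θ₂ * ∑ y, v₁ y * v₂ y := by
            rw [hv₂]
            simp only [Pi.smul_apply, smul_eq_mul]
            rw [Finset.mul_sum]
            exact Finset.sum_congr rfl fun y _ => by ring
    have h3 : (θ₁ - θ₂) * ∑ x, v₁ x * v₂ x = 0 := by
      rw [sub_mul, ← e1, ← e2, sub_self]
    rcases mul_eq_zero.mp h3 with h | h
    · exact absurd (sub_eq_zero.mp h) hθ
    · exact h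
  -- cardinalities
  set n : ℝ := (Fintype.card X : ℝ) with hn
  have hc1 : (Y₁.card : ℝ) = c₁ * n := by
    have : (Y₁.card : ℝ) = ∑ x, (if x ∈ Y₁ then (1:ℝ) else 0) := by
      rw [Finset.sum_boole]
      simp [Finset.filter_mem_eq_inter]
    rw [this]
    calc ∑ x, (if x ∈ Y₁ then (1:ℝ) else 0) = ∑ x, (c₁ + v₁ x) :=
          Finset.sum_congr rfl fun x _ => hd₁ x
      _ = c₁ * n := by rw [Finset.sum_add_distrib, hS1, add_zero,
            Finset.sum_const, Finset.card_univ, nsmul_eq_mul, mul_comm]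
  have hc2 : (Y₂.card : ℝ) = c₂ * n := by
    have : (Y₂.card : ℝ) = ∑ x, (if x ∈ Y₂ then (1:ℝ) else 0) := by
      rw [Finset.sum_boole]
      simp [Finset.filter_mem_eq_inter]
    rw [this]
    calc ∑ x, (if x ∈ Y₂ then (1:ℝ) else 0) = ∑ x, (c₂ + v₂ x) :=
          Finset.sum_congr rfl fun x _ => hd₂ x
      _ = c₂ * n := by rw [Finset.sum_add_distrib, hS2, add_zero,
            Finset.sum_const, Finset.card_univ, nsmul_eq_mul, mul_comm]
  have hcap : ((Y₁ ∩ Y₂).card : ℝ) = c₁ * c₂ * n := by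
    have h0 : ((Y₁ ∩ Y₂).card : ℝ) =
        ∑ x, (if x ∈ Y₁ then (1:ℝ) else 0) * (if x ∈ Y₂ then (1:ℝ) else 0) := by
      have : ∀ x, (if x ∈ Y₁ then (1:ℝ) else 0) * (if x ∈ Y₂ then (1:ℝ) else 0)
          = if x ∈ Y₁ ∩ Y₂ then (1:ℝ) else 0 := by
        intro x
        by_cases h1 : x ∈ Y₁ <;> by_cases h2 : x ∈ Y₂ <;>
          simp [h1, h2, Finset.mem_inter]
      rw [Finset.sum_congr rfl fun x _ => this x, Finset.sum_boole]
      congr 1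
      congr 1
      ext x
      simp [Finset.mem_inter]
    rw [h0]
    calc ∑ x, (if x ∈ Y₁ then (1:ℝ) else 0) * (if x ∈ Y₂ then (1:ℝ) else 0)
        = ∑ x, (c₁ + v₁ x) * (c₂ + v₂ x) :=
          Finset.sum_congr rfl fun x _ => by rw [hd₁ x, hd₂ x]
      _ = ∑ x, (c₁ * c₂ + c₁ * v₂ x + c₂ * v₁ x + v₁ x * v₂ x) :=
          Finset.sum_congr rfl fun x _ => by ring
      _ = c₁ * c₂ * n := by
          have s1 : ∑ _x : X, (c₁ * c₂) = c₁ * c₂ * n := by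
            rw [Finset.sum_const, Finset.card_univ, nsmul_eq_mul]; ring
          have s2 : ∑ x : X, c₁ * v₂ x = 0 := by rw [← Finset.mul_sum, hS2, mul_zero]
          have s3 : ∑ x : X, c₂ * v₁ x = 0 := by rw [← Finset.mul_sum, hS1, mul_zero]
          rw [Finset.sum_add_distrib, Finset.sum_add_distrib, Finset.sum_add_distrib,
            s1, s2, s3, horth]
          ring
  have goal : (((Y₁ ∩ Y₂).card * Fintype.card X : ℕ) : ℝ) = ((Y₁.card * Y₂.card : ℕ) : ℝ) := by
    push_cast
    rw [hcap, hc1, hc2, hn]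
    ring
  exact Nat.cast_inj.mp goal
end

section
/- Let Y be a subset of X = Q⁻(5,q)∖H such that every point of X∖Y is collinear to α points of Y and every point of Y is collinear to α + θ points of Y, where θ = −(q−1)² and α = |Y|/q. Then |Y| ≥ q(q−1)². (That is, an intriguing set of type 4 of the Penttila–Williford scheme has at least q(q−1)² points.) -/
/-- Lower bound for type-4 intriguing sets: if every point of `X ∖ Y` is collinear to
`α = |Y|/q` points of `Y` and every point of `Y` to `α + θ` points of `Y`, where
`θ = −(q−1)²`, then `|Y| ≥ q(q−1)²`. -/
theorem stmt_14 {Point : Type*} [Fintype Point] [DecidableEq Point]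
    (q : ℕ) (hq : 3 ≤ q)
    (X Y : Finset Point) (hYX : Y ⊆ X) (hYne : Y.Nonempty)
    (hXcard : X.card = q^2 * (q^2 - 1))
    (coll : Point → Point → Prop) [DecidableRel coll]
    (α θ : ℝ) (hθ : θ = -((q : ℝ) - 1)^2) (hα : (q : ℝ) * α = (Y.card : ℝ))
    (hout : ∀ x ∈ X, x ∉ Y → ((Y.filter (fun z => coll x z)).card : ℝ) = α)
    (hin : ∀ y ∈ Y, ((Y.filter (fun z => coll y z)).card : ℝ) = α + θ) :
    q * (q - 1)^2 ≤ Y.card := by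
  obtain ⟨y, hy⟩ := hYne
  have h := hin y hy
  have hnn : (0 : ℝ) ≤ α + θ := h ▸ Nat.cast_nonneg _
  have hα' : ((q : ℝ) - 1)^2 ≤ α := by rw [hθ] at hnn; linarith
  have hq1 : (1 : ℕ) ≤ q := by omega
  have hcast : ((q * (q - 1)^2 : ℕ) : ℝ) = (q : ℝ) * ((q : ℝ) - 1)^2 := by
    push_cast [Nat.cast_sub hq1]; ring
  have hfinal : ((q * (q - 1)^2 : ℕ) : ℝ) ≤ (Y.card : ℝ) := by
    rw [hcast, ← hα]
    have hqpos : (0 : ℝ) ≤ (q : ℝ) := Nat.cast_nonneg _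
    exact mul_le_mul_of_nonneg_left hα' hqpos
  exact_mod_cast hfinal
end
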